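/- arXiv:1502.04147 — 2 statements merged into one kernel-verified Lean document; each statement's English description precedes it below -/
import Mathlib

section
/- Let X ≥ −1 be a random variable, and conditionally on X let x_1,...,x_k be i.i.d. [−1,1]-valued (or bounded) random variables with E[x_i | X] = X, satisfying the Hoeffding bound P(|x̄_k − X| > ε | X) ≤ exp(−2ε²k) for all ε > 0, where x̄_k = (1/k)·Σ x_t. Then for any C > 0, 0 < ε ≤ C, and δ > 0: E[X · 1{x̄_k ≥ C}] ≥ (C − ε)·(1 − exp(−2δ²k))·P(X ≥ C + δ) − exp(−2ε²k). -/
/-! On `{x̄_k ≥ C}` split according to whether `X ≥ C − ε`. Where it is, the integrand is at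
least `C − ε`, and that part has mass at least `(1 − e^{−2δ²k}) P(X ≥ C + δ)`, since `X ≥ C + δ`
forces `x̄_k ≥ C` unless `x̄_k` deviates from `X` by more than `δ`. Where it is not, `x̄_k`
deviates by more than `ε`, so that part has mass at most `e^{−2ε²k}`, and there `X ≥ −1`. -/

open MeasureTheory

/-- `P(|x̄ − X| > ε | X ∈ B) ≤ p` for every Borel `B`, multiplied out so that null events are
allowed. -/
def DeviationBound {Ω : Type*} [MeasurableSpace Ω] (μ : Measure Ω) (X xbar : Ω → ℝ) (ε p : ℝ) :
    Prop :=
  ∀ B : Set ℝ, MeasurableSet B →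
    μ ({ω | ε < |xbar ω - X ω|} ∩ X ⁻¹' B) ≤ ENNReal.ofReal p * μ (X ⁻¹' B)

namespace DeviationBound

variable {Ω : Type*} [MeasurableSpace Ω] {μ : Measure Ω} {X xbar : Ω → ℝ} {ε p : ℝ}

theorem measureReal_sdiff_le [IsProbabilityMeasure μ] (h : DeviationBound μ X xbar ε p)
    (hp : 0 ≤ p) (c : ℝ) :
    μ.real ({ω | c ≤ xbar ω} \ {ω | c - ε ≤ X ω}) ≤ p := by
  have hsub : {ω | c ≤ xbar ω} \ {ω | c - ε ≤ X ω} ⊆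
      {ω | ε < |xbar ω - X ω|} ∩ X ⁻¹' Set.Iio (c - ε) := by
    rintro ω ⟨hxbar, hX⟩
    replace hX : X ω < c - ε := not_le.mp hX
    change c ≤ xbar ω at hxbar
    exact ⟨(by linarith : ε < xbar ω - X ω).trans_le (le_abs_self _), hX⟩
  refine ENNReal.toReal_le_of_le_ofReal hp ?_
  calc μ _ ≤ ENNReal.ofReal p * μ (X ⁻¹' Set.Iio (c - ε)) :=
        (measure_mono hsub).trans (h _ measurableSet_Iio)
    _ ≤ ENNReal.ofReal p := mul_le_of_le_one_right' prob_le_one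

theorem one_sub_mul_measureReal_le [IsFiniteMeasure μ] (h : DeviationBound μ X xbar ε p)
    (hp : 0 ≤ p) (c : ℝ) :
    (1 - p) * μ.real {ω | c + ε ≤ X ω} ≤ μ.real ({ω | c ≤ xbar ω} ∩ {ω | c + ε ≤ X ω}) := by
  set T := {ω | c + ε ≤ X ω}
  set bad := {ω | ε < |xbar ω - X ω|} ∩ X ⁻¹' Set.Ici (c + ε)
  have hcover : T ⊆ ({ω | c ≤ xbar ω} ∩ T) ∪ bad := by
    intro ω hω
    by_cases hdev : ε < |xbar ω - X ω|
    · exact Or.inr ⟨hdev, hω⟩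
    · have hclose := (abs_le.mp (not_lt.mp hdev)).1
      exact Or.inl ⟨show c ≤ xbar ω by change c + ε ≤ X ω at hω; linarith, hω⟩
  have hbad : μ.real bad ≤ p * μ.real T := by
    have := ENNReal.toReal_mono (by finiteness) (h (Set.Ici (c + ε)) measurableSet_Ici)
    rw [ENNReal.toReal_mul, ENNReal.toReal_ofReal hp] at this
    exact this
  have hT := (measureReal_mono (μ := μ) hcover).trans (measureReal_union_le _ _)
  linarith

end DeviationBound

theorem mul_measureReal_inter_sub_measureReal_sdiff_le_setIntegral {α : Type*}
    [MeasurableSpace α] {μ : Measure α} [IsFiniteMeasure μ] {f : α → ℝ} {s t : Set α} {a : ℝ}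
    (hs : MeasurableSet s) (ht : MeasurableSet t) (hf : Integrable f μ)
    (hft : ∀ x ∈ t, a ≤ f x) (hf_ge : ∀ᵐ x ∂μ, -1 ≤ f x) :
    a * μ.real (s ∩ t) - μ.real (s \ t) ≤ ∫ x in s, f x ∂μ := by
  have hinter : a * μ.real (s ∩ t) ≤ ∫ x in s ∩ t, f x ∂μ :=
    setIntegral_ge_of_const_le_real (hs.inter ht) (by finiteness)
      (fun x hx => hft x hx.2) hf.integrableOn
  have hsdiff : -μ.real (s \ t) ≤ ∫ x in s \ t, f x ∂μ := by
    simpa using setIntegral_mono_ae (s := s \ t) (integrableOn_const (by finiteness))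
      hf.integrableOn hf_ge
  rw [← integral_inter_add_sdiff ht hf.integrableOn]
  linarith

theorem stmt_5_general {Ω : Type*} [MeasurableSpace Ω] (μ : Measure Ω) [IsProbabilityMeasure μ]
    (k : ℕ) (X xbar : Ω → ℝ) (hXmeas : Measurable X) (hxbarmeas : Measurable xbar)
    (hXint : Integrable X μ)
    (hXlb : ∀ᵐ ω ∂μ, (-1 : ℝ) ≤ X ω)
    (hoeffding : ∀ ε : ℝ, 0 < ε → ∀ B : Set ℝ, MeasurableSet B →
      μ ({ω | ε < |xbar ω - X ω|} ∩ X ⁻¹' B)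
        ≤ ENNReal.ofReal (Real.exp (-2 * ε ^ 2 * k)) * μ (X ⁻¹' B))
    (C ε δ : ℝ) (hε : 0 < ε) (hεC : ε ≤ C) (hδ : 0 < δ) :
    (C - ε) * (1 - Real.exp (-2 * δ ^ 2 * k)) * (μ {ω | C + δ ≤ X ω}).toReal
        - Real.exp (-2 * ε ^ 2 * k)
      ≤ ∫ ω in {ω | C ≤ xbar ω}, X ω ∂μ := by
  set A := {ω | C ≤ xbar ω}
  set S := {ω | C - ε ≤ X ω}
  have hfar := DeviationBound.measureReal_sdiff_le (hoeffding ε hε) (Real.exp_pos _).le C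
  have hnear := DeviationBound.one_sub_mul_measureReal_le (hoeffding δ hδ) (Real.exp_pos _).le C
  have hshrink : μ.real (A ∩ {ω | C + δ ≤ X ω}) ≤ μ.real (A ∩ S) :=
    measureReal_mono (Set.inter_subset_inter_right _ fun ω (hω : C + δ ≤ X ω) =>
      show C - ε ≤ X ω by linarith)
  calc (C - ε) * (1 - Real.exp (-2 * δ ^ 2 * k)) * μ.real {ω | C + δ ≤ X ω}
        - Real.exp (-2 * ε ^ 2 * k)
      ≤ (C - ε) * μ.real (A ∩ S) - μ.real (A \ S) := by
        have hCε : 0 ≤ C - ε := sub_nonneg.mpr hεC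
        rw [mul_assoc]
        gcongr
        exact hnear.trans hshrink
    _ ≤ ∫ ω in A, X ω ∂μ :=
        mul_measureReal_inter_sub_measureReal_sdiff_le_setIntegral
          (measurableSet_le measurable_const hxbarmeas) (measurableSet_le measurable_const hXmeas)
          hXint (fun _ hω => hω) hXlb

/-- Lower bound on the truncated expectation of a latent mean `X` given that the empirical
estimate `x̄_k` exceeds a threshold `C`, assuming the Hoeffding bound conditionally on `X`:
`E[X · 1{x̄_k ≥ C}] ≥ (C − ε)(1 − exp(−2δ²k)) P(X ≥ C + δ) − exp(−2ε²k)`. -/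
theorem stmt_5 {Ω : Type*} [MeasurableSpace Ω] (μ : Measure Ω) [IsProbabilityMeasure μ]
    (k : ℕ) (X xbar : Ω → ℝ) (hXmeas : Measurable X) (hxbarmeas : Measurable xbar)
    (hXint : Integrable X μ)
    (hXlb : ∀ᵐ ω ∂μ, (-1 : ℝ) ≤ X ω)
    (hoeffding : ∀ ε : ℝ, 0 < ε → ∀ B : Set ℝ, MeasurableSet B →
      μ ({ω | ε < |xbar ω - X ω|} ∩ X ⁻¹' B)
        ≤ ENNReal.ofReal (Real.exp (-2 * ε ^ 2 * k)) * μ (X ⁻¹' B))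
    (C ε δ : ℝ) (hC : 0 < C) (hε : 0 < ε) (hεC : ε ≤ C) (hδ : 0 < δ) :
    (C - ε) * (1 - Real.exp (-2 * δ ^ 2 * k)) * (μ {ω | C + δ ≤ X ω}).toReal
        - Real.exp (-2 * ε ^ 2 * k)
      ≤ ∫ ω in {ω | C ≤ xbar ω}, X ω ∂μ :=
  stmt_5_general μ k X xbar hXmeas hxbarmeas hXint hXlb hoeffding C ε δ hε hεC hδ
end

section
/- Let X ≥ −1 be a random variable with x_1,...,x_k ∈ [0,1] i.i.d. given X with conditional mean X and satisfying the Hoeffding bound. For any C, ζ, κ ∈ (0,1), if k ≥ (−log(κ·(1−ζ)·C·P(X ≥ (1+ζ)C))) / (2ζ²C²), then E[X·1{x̄_k ≥ C}] ≥ (1−ζ)·C·(1 − κ − κ(1−ζ))·P(X ≥ (1+ζ)C). -/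
open MeasureTheory ProbabilityTheory

set_option maxHeartbeats 1000000 in
/-- If `k ≥ (−log(κ(1−ζ)C·P(X ≥ (1+ζ)C))) / (2ζ²C²)`, then
`E[X · 1{x̄_k ≥ C}] ≥ (1−ζ)C(1 − κ − κ(1−ζ)) · P(X ≥ (1+ζ)C)`. -/
theorem stmt_6 {Ω : Type*} [MeasurableSpace Ω] (μ : Measure Ω) [IsProbabilityMeasure μ]
    (k : ℕ) (X xbar : Ω → ℝ) (hXmeas : Measurable X) (hxbarmeas : Measurable xbar)
    (hXint : Integrable X μ)
    (hXlb : ∀ᵐ ω ∂μ, (-1 : ℝ) ≤ X ω)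
    (hoeffding : ∀ ε : ℝ, 0 < ε → ∀ B : Set ℝ, MeasurableSet B →
      μ ({ω | ε < |xbar ω - X ω|} ∩ X ⁻¹' B)
        ≤ ENNReal.ofReal (Real.exp (-2 * ε ^ 2 * k)) * μ (X ⁻¹' B))
    (C ζ κ : ℝ) (hC : C ∈ Set.Ioo (0 : ℝ) 1) (hζ : ζ ∈ Set.Ioo (0 : ℝ) 1)
    (hκ : κ ∈ Set.Ioo (0 : ℝ) 1)
    (hP : 0 < (μ {ω | (1 + ζ) * C ≤ X ω}).toReal)
    (hk : (-Real.log (κ * (1 - ζ) * C * (μ {ω | (1 + ζ) * C ≤ X ω}).toReal))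
            / (2 * ζ ^ 2 * C ^ 2) ≤ (k : ℝ)) :
    (1 - ζ) * C * (1 - κ - κ * (1 - ζ)) * (μ {ω | (1 + ζ) * C ≤ X ω}).toReal
      ≤ ∫ ω in {ω | C ≤ xbar ω}, X ω ∂μ := by
  obtain ⟨hC0, hC1⟩ := hC
  obtain ⟨hζ0, hζ1⟩ := hζ
  obtain ⟨hκ0, hκ1⟩ := hκ
  set G : Set Ω := {ω | (1 + ζ) * C ≤ X ω} with hGdef
  set p : ℝ := (μ G).toReal with hpdef
  set ε : ℝ := ζ * C with hεdef
  have hε : 0 < ε := mul_pos hζ0 hC0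
  set F : Set Ω := {ω | ε < |xbar ω - X ω|} with hFdef
  set A : Set Ω := {ω | C ≤ xbar ω} with hAdef
  set δ : ℝ := Real.exp (-2 * ε ^ 2 * k) with hδdef
  have hδ0 : 0 < δ := Real.exp_pos _
  have hGmeas : MeasurableSet G := hXmeas measurableSet_Ici
  have hFmeas : MeasurableSet F := by
    have : Measurable fun ω => |xbar ω - X ω| := (hxbarmeas.sub hXmeas).abs
    exact measurableSet_lt measurable_const this
  have hAmeas : MeasurableSet A := measurableSet_le measurable_const hxbarmeas
  have hp1 : p ≤ 1 := by
    have := prob_le_one (μ := μ) (s := G)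
    simpa [hpdef] using ENNReal.toReal_mono (by simp) this
  -- Step 1: δ ≤ κ (1-ζ) C p
  have hζ' : (0:ℝ) ≤ 1 - ζ := by linarith
  have hq0 : 0 < κ * (1 - ζ) * C * p :=
    mul_pos (mul_pos (mul_pos hκ0 (by linarith)) hC0) hP
  have hδle : δ ≤ κ * (1 - ζ) * C * p := by
    have h2 : (0:ℝ) < 2 * ζ ^ 2 * C ^ 2 := by positivity
    have h3 := (div_le_iff₀ h2).mp hk
    have hεsq : ε ^ 2 = ζ ^ 2 * C ^ 2 := by rw [hεdef]; ring
    have hexp : -2 * ε ^ 2 * k ≤ Real.log (κ * (1 - ζ) * C * p) := by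
      rw [hεsq]; nlinarith [h3]
    calc δ ≤ Real.exp (Real.log (κ * (1 - ζ) * C * p)) := Real.exp_le_exp.mpr hexp
      _ = κ * (1 - ζ) * C * p := Real.exp_log hq0
  -- Step 2: μ F ≤ ofReal δ
  have hδeq : δ = Real.exp (-(2 * ε ^ 2 * k)) := by rw [hδdef]; ring_nf
  have hF : μ F ≤ ENNReal.ofReal δ := by
    have := hoeffding ε hε Set.univ MeasurableSet.univ
    rw [hδeq]
    simpa using this
  -- Step 3: μ (F ∩ G) ≤ ofReal δ * μ G
  have hFG : μ (F ∩ G) ≤ ENNReal.ofReal δ * μ G := by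
    have := hoeffding ε hε (Set.Ici ((1 + ζ) * C)) measurableSet_Ici
    have hpre : X ⁻¹' Set.Ici ((1 + ζ) * C) = G := rfl
    rw [hδeq]
    simpa [hpre] using this
  -- Step 4: G \ F ⊆ A \ F
  have hsub : G \ F ⊆ A \ F := by
    rintro ω ⟨hG, hFc⟩
    refine ⟨?_, hFc⟩
    have h1 : |xbar ω - X ω| ≤ ε := le_of_not_gt hFc
    have h2 : (1 + ζ) * C ≤ X ω := hG
    have := abs_le.mp h1
    simp only [hAdef, Set.mem_setOf_eq]
    nlinarith [this.1]
  set a1 : ℝ := (μ (A \ F)).toReal with ha1def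
  set a2 : ℝ := (μ (A ∩ F)).toReal with ha2def
  have hfin : ∀ s : Set Ω, μ s ≠ ⊤ := fun s => measure_ne_top μ s
  have ha1lb : p - δ * p ≤ a1 := by
    have hsplit : μ G ≤ μ (G ∩ F) + μ (G \ F) := measure_le_inter_add_diff μ G F
    have hGF : (μ (G ∩ F)).toReal ≤ δ * p := by
      have : μ (G ∩ F) ≤ ENNReal.ofReal δ * μ G := by
        rw [Set.inter_comm]; exact hFG
      have h' := ENNReal.toReal_mono (by
        exact ENNReal.mul_ne_top ENNReal.ofReal_ne_top (hfin G)) this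
      rwa [ENNReal.toReal_mul, ENNReal.toReal_ofReal hδ0.le] at h'
    have hmono : (μ (G \ F)).toReal ≤ a1 :=
      ENNReal.toReal_mono (hfin _) (measure_mono hsub)
    have h' := ENNReal.toReal_mono (by
      exact ENNReal.add_ne_top.mpr ⟨hfin _, hfin _⟩) hsplit
    rw [ENNReal.toReal_add (hfin _) (hfin _)] at h'
    linarith
  have ha2ub : a2 ≤ δ := by
    have : μ (A ∩ F) ≤ ENNReal.ofReal δ := le_trans (measure_mono Set.inter_subset_right) hF
    have h' := ENNReal.toReal_mono ENNReal.ofReal_ne_top this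
    rwa [ENNReal.toReal_ofReal hδ0.le] at h'
  -- split the integral
  have hIntOn : ∀ s : Set Ω, IntegrableOn X s μ := fun s => hXint.integrableOn
  have hsplit : ∫ ω in A, X ω ∂μ = (∫ ω in A \ F, X ω ∂μ) + ∫ ω in A ∩ F, X ω ∂μ := by
    have hdisj : Disjoint (A \ F) (A ∩ F) :=
      Set.disjoint_left.mpr (fun ω h h' => h.2 h'.2)
    rw [← setIntegral_union hdisj (hAmeas.inter hFmeas)
      (hIntOn _) (hIntOn _), Set.diff_union_inter]
  have hI1 : (1 - ζ) * C * a1 ≤ ∫ ω in A \ F, X ω ∂μ := by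
    have hptwise : ∀ ω ∈ A \ F, (1 - ζ) * C ≤ X ω := by
      rintro ω ⟨hA, hFc⟩
      have h1 : |xbar ω - X ω| ≤ ε := le_of_not_gt hFc
      have := abs_le.mp h1
      have h2 : C ≤ xbar ω := hA
      nlinarith [this.2]
    have := setIntegral_mono_on ((integrableOn_const_iff).mpr (Or.inr (lt_of_le_of_ne
      (le_top) (hfin _)))) (hIntOn _) (hAmeas.diff hFmeas) hptwise
    simpa [ha1def, mul_comm, measureReal_def] using this
  have hI2 : -a2 ≤ ∫ ω in A ∩ F, X ω ∂μ := by
    have hae : ∀ᵐ ω ∂(μ.restrict (A ∩ F)), (fun _ => (-1:ℝ)) ω ≤ X ω :=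
      ae_restrict_of_ae hXlb
    have := setIntegral_mono_ae_restrict ((integrableOn_const_iff).mpr (Or.inr (lt_of_le_of_ne
      (le_top) (hfin _)))) (hIntOn _) hae
    simpa [ha2def, mul_comm, measureReal_def] using this
  have ha10 : 0 ≤ a1 := ENNReal.toReal_nonneg
  have ha20 : 0 ≤ a2 := ENNReal.toReal_nonneg
  have hCp : C * p ≤ 1 := by nlinarith
  have hδpmul : δ * p ≤ κ * (1 - ζ) * C * p * p :=
    mul_le_mul_of_nonneg_right hδle hP.le
  have hδp1 : (1 - ζ) * C * (δ * p) ≤ (1 - ζ) * C * (κ * (1 - ζ) * C * p * p) :=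
    mul_le_mul_of_nonneg_left hδpmul (mul_nonneg hζ' hC0.le)
  have hcoef : 0 ≤ κ * (1 - ζ) ^ 2 * C * p :=
    mul_nonneg (mul_nonneg (mul_nonneg hκ0.le (sq_nonneg _)) hC0.le) hP.le
  have h2' : κ * (1 - ζ) ^ 2 * C * p * (C * p) ≤ κ * (1 - ζ) ^ 2 * C * p * 1 :=
    mul_le_mul_of_nonneg_left hCp hcoef
  have hI1' : (1 - ζ) * C * (p - δ * p) ≤ (1 - ζ) * C * a1 :=
    mul_le_mul_of_nonneg_left ha1lb (mul_nonneg hζ' hC0.le)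
  rw [hsplit]
  nlinarith [hδle, hδp1, h2', hI1', hI1, hI2, ha2ub]
end
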